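/- arXiv:1512.03951 — 6 statements merged into one kernel-verified Lean document; each statement's English description precedes it below -/
import Mathlib

section
/- For every real number $n \ge 1$, the function $\xi \mapsto K(\xi)\,\xi^n$ is nonnegative and increasing on $[0,\infty)$: for all $0 \le \xi_1 \le \xi_2$ one has $0 \le K(\xi_1)\xi_1^n \le K(\xi_2)\xi_2^n$. -/
/-!
Since `s(ξ) g(s(ξ)) = ξ`, one has `K(ξ) ξ ^ n = s(ξ) ξ ^ (n - 1)`. The map `s ↦ s g(s)` is strictly
increasing on `[0, ∞)` because `g` is positive and increasing there, so its inverse `s` is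
increasing; and `ξ ^ (n - 1)` is increasing for `n ≥ 1`.
-/

open Set

theorem StrictMonoOn.monotoneOn_of_rightInvOn {α β : Type*} [LinearOrder α] [Preorder β]
    {f : α → β} {u : β → α} {s : Set β} {t : Set α} (hf : StrictMonoOn f t)
    (hu : MapsTo u s t) (hinv : RightInvOn u f s) : MonotoneOn u s := fun a ha b hb hab =>
  (hf.le_iff_le (hu ha) (hu hb)).1 (by rwa [hinv ha, hinv hb])

theorem strictMonoOn_id_mul_of_monotoneOn {g : ℝ → ℝ} (hg : MonotoneOn g (Ici 0))
    (hpos : ∀ s ∈ Ici (0 : ℝ), 0 < g s) : StrictMonoOn (fun s => s * g s) (Ici 0) :=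
  fun _ ha b hb hab =>
    (mul_le_mul_of_nonneg_left (hg ha hb hab.le) ha).trans_lt
      (mul_lt_mul_of_pos_right hab (hpos b hb))

theorem one_div_mul_rpow_of_mul_eq {s G ξ n : ℝ} (hG : G ≠ 0) (hξ : 0 ≤ ξ) (hn : n ≠ 0)
    (h : s * G = ξ) : 1 / G * ξ ^ n = s * ξ ^ (n - 1) := by
  rw [← add_sub_cancel 1 n, Real.rpow_one_add' hξ (by simpa using hn), add_sub_cancel_left, ← h]
  field_simp

section GeneralizedPolynomial

variable {ι : Type*} [Fintype ι] {c α : ι → ℝ}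

theorem monotoneOn_sum_mul_rpow (hc : ∀ i, 0 ≤ c i) (hα : ∀ i, 0 ≤ α i) :
    MonotoneOn (fun s => ∑ i, c i * s ^ α i) (Ici 0) := fun _ hs _ _ hst =>
  Finset.sum_le_sum fun i _ => mul_le_mul_of_nonneg_left (Real.rpow_le_rpow hs hst (hα i)) (hc i)

theorem sum_mul_rpow_pos (hc : ∀ i, 0 ≤ c i) {i₀ : ι} (hc₀ : 0 < c i₀) (hα₀ : α i₀ = 0)
    {s : ℝ} (hs : 0 ≤ s) : 0 < ∑ i, c i * s ^ α i :=
  calc 0 < c i₀ * s ^ α i₀ := by rwa [hα₀, Real.rpow_zero, mul_one]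
    _ ≤ ∑ i, c i * s ^ α i :=
      Finset.single_le_sum (f := fun i => c i * s ^ α i)
        (fun i _ => mul_nonneg (hc i) (Real.rpow_nonneg hs _)) (Finset.mem_univ i₀)

end GeneralizedPolynomial

theorem stmt3_general
    (N : ℕ)
    (α : Fin (N + 1) → ℝ) (hα0 : α 0 = 0) (hαmono : StrictMono α)
    (c : Fin (N + 1) → ℝ) (hc : ∀ i, 0 ≤ c i) (hc0 : 0 < c 0)
    (g : ℝ → ℝ) (hg : ∀ s : ℝ, 0 ≤ s → g s = ∑ i, c i * s ^ (α i))
    (sfun : ℝ → ℝ)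
    (hsfun : ∀ ξ : ℝ, 0 ≤ ξ → 0 ≤ sfun ξ ∧ sfun ξ * g (sfun ξ) = ξ)
    (K : ℝ → ℝ) (hK : ∀ ξ : ℝ, 0 ≤ ξ → K ξ = 1 / g (sfun ξ)) :
    ∀ n : ℝ, 1 ≤ n → ∀ ξ₁ ξ₂ : ℝ, 0 ≤ ξ₁ → ξ₁ ≤ ξ₂ →
      0 ≤ K ξ₁ * ξ₁ ^ n ∧ K ξ₁ * ξ₁ ^ n ≤ K ξ₂ * ξ₂ ^ n := by
  have hα : ∀ i, 0 ≤ α i := fun i => hα0 ▸ hαmono.monotone (Fin.zero_le i)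
  have hg_pos : ∀ s ∈ Ici (0 : ℝ), 0 < g s := fun s hs => by
    rw [hg s hs]; exact sum_mul_rpow_pos hc hc0 hα0 hs
  have hg_mono : MonotoneOn g (Ici 0) :=
    (monotoneOn_sum_mul_rpow hc hα).congr fun s hs => (hg s hs).symm
  have hsfun_mono : MonotoneOn sfun (Ici 0) :=
    (strictMonoOn_id_mul_of_monotoneOn hg_mono hg_pos).monotoneOn_of_rightInvOn
      (fun ξ hξ => (hsfun ξ hξ).1) (fun ξ hξ => (hsfun ξ hξ).2)
  intro n hn ξ₁ ξ₂ hξ₁ h12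
  have hξ₂ : 0 ≤ ξ₂ := hξ₁.trans h12
  have hKξ : ∀ ξ, 0 ≤ ξ → K ξ * ξ ^ n = sfun ξ * ξ ^ (n - 1) := fun ξ hξ => by
    rw [hK ξ hξ]
    exact one_div_mul_rpow_of_mul_eq (hg_pos _ (hsfun ξ hξ).1).ne' hξ (by linarith)
      (hsfun ξ hξ).2
  rw [hKξ ξ₁ hξ₁, hKξ ξ₂ hξ₂]
  have hpow_nonneg : 0 ≤ ξ₁ ^ (n - 1) := Real.rpow_nonneg hξ₁ _
  exact ⟨mul_nonneg (hsfun ξ₁ hξ₁).1 hpow_nonneg,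
    mul_le_mul (hsfun_mono hξ₁ hξ₂ h12) (Real.rpow_le_rpow hξ₁ h12 (by linarith)) hpow_nonneg
      (hsfun ξ₂ hξ₂).1⟩

/-- For every real `n ≥ 1`, the function `ξ ↦ K ξ * ξ ^ n` is nonnegative and
increasing on `[0,∞)`. -/
theorem stmt3
    (N : ℕ) (hN : 1 ≤ N)
    (α : Fin (N + 1) → ℝ) (hα0 : α 0 = 0) (hαmono : StrictMono α)
    (c : Fin (N + 1) → ℝ) (hc : ∀ i, 0 ≤ c i) (hc0 : 0 < c 0) (hcN : 0 < c (Fin.last N))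
    (g : ℝ → ℝ) (hg : ∀ s : ℝ, 0 ≤ s → g s = ∑ i, c i * s ^ (α i))
    (sfun : ℝ → ℝ)
    (hsfun : ∀ ξ : ℝ, 0 ≤ ξ → 0 ≤ sfun ξ ∧ sfun ξ * g (sfun ξ) = ξ)
    (K : ℝ → ℝ) (hK : ∀ ξ : ℝ, 0 ≤ ξ → K ξ = 1 / g (sfun ξ)) :
    ∀ n : ℝ, 1 ≤ n → ∀ ξ₁ ξ₂ : ℝ, 0 ≤ ξ₁ → ξ₁ ≤ ξ₂ →
      0 ≤ K ξ₁ * ξ₁ ^ n ∧ K ξ₁ * ξ₁ ^ n ≤ K ξ₂ * ξ₂ ^ n :=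
  stmt3_general N α hα0 hαmono c hc hc0 g hg sfun hsfun K hK
end

section
/- There exist positive constants $c_1, c_2$ (depending only on $g$) such that for all $\xi \ge 0$, $\dfrac{c_1}{(1+\xi)^a} \le K(\xi) \le \dfrac{c_2}{(1+\xi)^a}$, where $a=\alpha_N/(\alpha_N+1)$. -/
/-!
Both sides are governed by the size of `s = s(ξ)`. The generalized polynomial `g` is comparable
to `(1 + s)^α_N`: its constant term bounds it from below near `0`, its top term for large `s`, and
every term is at most `(1 + s)^α_N`. Hence `1 + ξ = 1 + s g(s)` is comparable to
`(1 + s)^(α_N + 1)`, and raising this to the power `a = α_N / (α_N + 1)` shows that `g(s) = 1 / K(ξ)`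
is comparable to `(1 + ξ)^a`.
-/

open Real Finset

lemma one_add_rpow_le_two_rpow_mul {x p : ℝ} (hx : 0 ≤ x) (hp : 0 ≤ p) :
    (1 + x) ^ p ≤ 2 ^ p * (1 + x ^ p) := by
  rcases le_total x 1 with hx1 | hx1
  · calc (1 + x) ^ p ≤ 2 ^ p := rpow_le_rpow (by positivity) (by linarith) hp
      _ ≤ 2 ^ p * (1 + x ^ p) :=
        le_mul_of_one_le_right (by positivity) (by linarith [rpow_nonneg hx p])
  · calc (1 + x) ^ p ≤ (2 * x) ^ p := rpow_le_rpow (by positivity) (by linarith) hp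
      _ = 2 ^ p * x ^ p := mul_rpow (by norm_num) hx
      _ ≤ 2 ^ p * (1 + x ^ p) := by gcongr; linarith

section GeneralizedPolynomial

variable {ι : Type*} [Fintype ι] {c α : ι → ℝ} {A s : ℝ}

lemma sum_mul_rpow_le (hc : ∀ i, 0 ≤ c i) (hα : ∀ i, 0 ≤ α i) (hαA : ∀ i, α i ≤ A)
    (hs : 0 ≤ s) : ∑ i, c i * s ^ α i ≤ (∑ i, c i) * (1 + s) ^ A := by
  rw [Finset.sum_mul]
  gcongr with i _
  · exact hc i
  calc s ^ α i ≤ (1 + s) ^ α i := rpow_le_rpow hs (by linarith) (hα i)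
    _ ≤ (1 + s) ^ A := rpow_le_rpow_of_exponent_le (by linarith) (hαA i)

lemma le_sum_mul_rpow (hc : ∀ i, 0 ≤ c i) (hA : 0 ≤ A) (hs : 0 ≤ s) {i₀ j : ι}
    (hi₀ : α i₀ = 0) (hj : α j = A) :
    min (c i₀) (c j) / 2 ^ (A + 1) * (1 + s) ^ A ≤ ∑ i, c i * s ^ α i := by
  have hterm (k : ι) : c k * s ^ α k ≤ ∑ i, c i * s ^ α i :=
    single_le_sum (fun i _ => mul_nonneg (hc i) (rpow_nonneg hs _)) (mem_univ k)
  have hconst := hterm i₀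
  have htop := hterm j
  rw [hi₀, rpow_zero, mul_one] at hconst
  rw [hj] at htop
  have hmin : 0 ≤ min (c i₀) (c j) := le_min (hc i₀) (hc j)
  calc min (c i₀) (c j) / 2 ^ (A + 1) * (1 + s) ^ A
      ≤ min (c i₀) (c j) / 2 ^ (A + 1) * (2 ^ A * (1 + s ^ A)) := by
        gcongr; exact one_add_rpow_le_two_rpow_mul hs hA
    _ = (min (c i₀) (c j) + min (c i₀) (c j) * s ^ A) / 2 := by
        rw [rpow_add_one two_ne_zero]; field_simp
    _ ≤ (c i₀ + c j * s ^ A) / 2 := by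
        gcongr
        · exact min_le_left _ _
        · exact min_le_right _ _
    _ ≤ ∑ i, c i * s ^ α i := by linarith

end GeneralizedPolynomial

lemma one_add_mul_bounds {A m M s G : ℝ} (hA : 0 ≤ A) (hm : 0 ≤ m) (hs : 0 ≤ s)
    (hlow : m * (1 + s) ^ A ≤ G) (hup : G ≤ M * (1 + s) ^ A) :
    min 1 m / 2 ^ (A + 1) * (1 + s) ^ (A + 1) ≤ 1 + s * G ∧
      1 + s * G ≤ (1 + M) * (1 + s) ^ (A + 1) := by
  have h1s : (1 : ℝ) ≤ (1 + s) ^ A := one_le_rpow (by linarith) hA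
  constructor
  · have hsA : s ^ (A + 1) ≤ s * (1 + s) ^ A := by
      rw [rpow_add_one' hs (by linarith), mul_comm]
      gcongr
      linarith
    calc min 1 m / 2 ^ (A + 1) * (1 + s) ^ (A + 1)
        ≤ min 1 m / 2 ^ (A + 1) * (2 ^ (A + 1) * (1 + s ^ (A + 1))) := by
          gcongr; exact one_add_rpow_le_two_rpow_mul hs (by linarith)
      _ = min 1 m * 1 + min 1 m * s ^ (A + 1) := by field_simp
      _ ≤ 1 * 1 + m * (s * (1 + s) ^ A) := by
          gcongr
          · exact min_le_left _ _
          · exact min_le_right _ _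
      _ ≤ 1 + s * G := by nlinarith
  · rw [rpow_add_one (by linarith)]
    nlinarith [mul_le_mul_of_nonneg_left hup hs]

lemma exists_bounds_rpow_one_add_mul {A m M : ℝ} {G : ℝ → ℝ} (hA : 0 ≤ A) (hm : 0 < m)
    (hM : 0 < M) (hG : ∀ s, 0 ≤ s → m * (1 + s) ^ A ≤ G s ∧ G s ≤ M * (1 + s) ^ A) :
    ∃ m' M' : ℝ, 0 < m' ∧ 0 < M' ∧ ∀ s, 0 ≤ s →
      m' * (1 + s * G s) ^ (A / (A + 1)) ≤ G s ∧ G s ≤ M' * (1 + s * G s) ^ (A / (A + 1)) := by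
  set κ := min 1 m / 2 ^ (A + 1)
  have hκ : 0 < κ := by positivity
  refine ⟨m / (1 + M) ^ (A / (A + 1)), M / κ ^ (A / (A + 1)), by positivity, by positivity,
    fun s hs => ?_⟩
  obtain ⟨hlow, hup⟩ := hG s hs
  obtain ⟨hXlow, hXup⟩ := one_add_mul_bounds hA hm.le hs hlow hup
  have hpow : ((1 + s) ^ (A + 1)) ^ (A / (A + 1)) = (1 + s) ^ A := by
    rw [← rpow_mul (by linarith), mul_div_cancel₀ _ (by linarith)]
  have hX : 0 ≤ 1 + s * G s := (by positivity : 0 ≤ κ * (1 + s) ^ (A + 1)).trans hXlow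
  constructor
  · calc m / (1 + M) ^ (A / (A + 1)) * (1 + s * G s) ^ (A / (A + 1))
        ≤ m / (1 + M) ^ (A / (A + 1)) * ((1 + M) * (1 + s) ^ (A + 1)) ^ (A / (A + 1)) := by
          gcongr
      _ = m * (1 + s) ^ A := by
          rw [mul_rpow (by linarith) (by positivity), hpow]; field_simp
      _ ≤ G s := hlow
  · calc G s ≤ M * (1 + s) ^ A := hup
      _ = M / κ ^ (A / (A + 1)) * (κ * (1 + s) ^ (A + 1)) ^ (A / (A + 1)) := by
          rw [mul_rpow hκ.le (by positivity), hpow]; field_simp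
      _ ≤ M / κ ^ (A / (A + 1)) * (1 + s * G s) ^ (A / (A + 1)) := by gcongr

theorem stmt4_general
    (N : ℕ)
    (α : Fin (N + 1) → ℝ) (hα0 : α 0 = 0) (hαmono : StrictMono α)
    (c : Fin (N + 1) → ℝ) (hc : ∀ i, 0 ≤ c i) (hc0 : 0 < c 0) (hcN : 0 < c (Fin.last N))
    (g : ℝ → ℝ) (hg : ∀ s : ℝ, 0 ≤ s → g s = ∑ i, c i * s ^ (α i))
    (sfun : ℝ → ℝ)
    (hsfun : ∀ ξ : ℝ, 0 ≤ ξ → 0 ≤ sfun ξ ∧ sfun ξ * g (sfun ξ) = ξ)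
    (K : ℝ → ℝ) (hK : ∀ ξ : ℝ, 0 ≤ ξ → K ξ = 1 / g (sfun ξ))
    (a : ℝ) (ha : a = α (Fin.last N) / (α (Fin.last N) + 1)) :
    ∃ c₁ c₂ : ℝ, 0 < c₁ ∧ 0 < c₂ ∧ ∀ ξ : ℝ, 0 ≤ ξ →
      c₁ / (1 + ξ) ^ a ≤ K ξ ∧ K ξ ≤ c₂ / (1 + ξ) ^ a := by
  set A := α (Fin.last N)
  have hα : ∀ i, 0 ≤ α i := fun i => hα0 ▸ hαmono.monotone (Fin.zero_le i)
  have hαA : ∀ i, α i ≤ A := fun i => hαmono.monotone (Fin.le_last i)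
  have hC : 0 < ∑ i, c i := hc0.trans_le (single_le_sum (fun i _ => hc i) (mem_univ 0))
  have hm : 0 < min (c 0) (c (Fin.last N)) / 2 ^ (A + 1) := by
    have := lt_min hc0 hcN
    positivity
  obtain ⟨m, M, hm', hM', hbounds⟩ := exists_bounds_rpow_one_add_mul (hα _) hm hC (G := g)
    fun s hs => by
      rw [hg s hs]
      exact ⟨le_sum_mul_rpow hc (hα _) hs hα0 rfl, sum_mul_rpow_le hc hα hαA hs⟩
  refine ⟨1 / M, 1 / m, by positivity, by positivity, fun ξ hξ => ?_⟩
  obtain ⟨hs, hsξ⟩ := hsfun ξ hξ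
  obtain ⟨hlow, hup⟩ := hbounds _ hs
  rw [hsξ, ← ha] at hlow hup
  have hgpos : 0 < g (sfun ξ) := lt_of_lt_of_le (by positivity) hlow
  rw [hK ξ hξ, div_div, div_div]
  exact ⟨one_div_le_one_div_of_le hgpos hup, one_div_le_one_div_of_le (by positivity) hlow⟩

/-- There exist positive constants `c₁, c₂` such that for all `ξ ≥ 0`,
`c₁ / (1+ξ)^a ≤ K ξ ≤ c₂ / (1+ξ)^a`, where `a = α_N / (α_N + 1)`. -/
theorem stmt4
    (N : ℕ) (hN : 1 ≤ N)
    (α : Fin (N + 1) → ℝ) (hα0 : α 0 = 0) (hαmono : StrictMono α)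
    (c : Fin (N + 1) → ℝ) (hc : ∀ i, 0 ≤ c i) (hc0 : 0 < c 0) (hcN : 0 < c (Fin.last N))
    (g : ℝ → ℝ) (hg : ∀ s : ℝ, 0 ≤ s → g s = ∑ i, c i * s ^ (α i))
    (sfun : ℝ → ℝ)
    (hsfun : ∀ ξ : ℝ, 0 ≤ ξ → 0 ≤ sfun ξ ∧ sfun ξ * g (sfun ξ) = ξ)
    (K : ℝ → ℝ) (hK : ∀ ξ : ℝ, 0 ≤ ξ → K ξ = 1 / g (sfun ξ))
    (a : ℝ) (ha : a = α (Fin.last N) / (α (Fin.last N) + 1)) :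
    ∃ c₁ c₂ : ℝ, 0 < c₁ ∧ 0 < c₂ ∧ ∀ ξ : ℝ, 0 ≤ ξ →
      c₁ / (1 + ξ) ^ a ≤ K ξ ∧ K ξ ≤ c₂ / (1 + ξ) ^ a :=
  stmt4_general N α hα0 hαmono c hc hc0 hcN g hg sfun hsfun K hK a ha
end

section
/- There exist positive constants $c_2, c_3$ (depending only on $g$) such that for every real number $n \ge 1$, every $\delta > 0$, and every $\xi \ge 0$, $c_3\left(\dfrac{\delta}{1+\delta}\right)^a\left(\xi^{n-a} - \delta^{n-a}\right) \le K(\xi)\,\xi^n \le c_2\,\xi^{n-a}$, where $a=\alpha_N/(\alpha_N+1)$. -/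
/-!
Write `A = α_N`, `G = g(s)` and `ξ = s G`. Then `K(ξ) ξ^n = (ξ^a / G) ξ^(n-a)` and
`ξ^a / G = (s^A / G)^(1/(A+1))`, so everything reduces to two-sided bounds on `s^A / G`.
From above, `c_N s^A ≤ G`. From below, `G ≤ C (1+s)^A` gives `s^A / G ≥ C⁻¹ (s/(1+s))^A`,
and once `ξ ≥ δ` the ratio `s/(1+s)` is at least `δ / (2C(1+δ))`: for `s ≥ 1` it is at least
`1/2`, and for `s ≤ 1` we have `G ≤ C`, hence `s ≥ δ / C`.
-/

open Real Finset

lemma mul_rpow_div_self_eq {s G A : ℝ} (hs : 0 ≤ s) (hG : 0 ≤ G) (hA : 0 ≤ A) :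
    (s * G) ^ (A / (A + 1)) / G = (s ^ A / G) ^ (1 / (A + 1)) := by
  rcases hG.eq_or_lt with rfl | hG
  · rw [mul_zero, div_zero, div_zero, zero_rpow (by positivity)]
  have hGG : G ^ (A / (A + 1)) * G ^ (1 / (A + 1)) = G := by
    rw [← rpow_add hG, ← add_div, div_self (by linarith), rpow_one]
  rw [mul_rpow hs hG.le, div_rpow (rpow_nonneg hs _) hG.le, ← rpow_mul hs, mul_one_div,
    div_eq_div_iff hG.ne' (rpow_pos_of_pos hG _).ne', mul_assoc, hGG]

lemma inv_mul_div_le_div_one_add {s G C δ : ℝ} (hs : 0 ≤ s) (hC : 1 ≤ C)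
    (hGC : s ≤ 1 → G ≤ C) (hδ : 0 < δ) (hδs : δ ≤ s * G) :
    (2 * C)⁻¹ * (δ / (1 + δ)) ≤ s / (1 + s) := by
  have hδδ : δ / (1 + δ) ≤ 1 := (div_le_one (by linarith)).2 (by linarith)
  rcases le_total s 1 with hs₁ | hs₁
  · have hδC : δ ≤ C * s := by nlinarith [hGC hs₁]
    calc (2 * C)⁻¹ * (δ / (1 + δ)) ≤ (2 * C)⁻¹ * (C * s) :=
          mul_le_mul_of_nonneg_left ((div_le_self hδ.le (by linarith)).trans hδC) (by positivity)
      _ = s / 2 := by field_simp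
      _ ≤ s / (1 + s) := div_le_div_of_nonneg_left hs (by linarith) (by linarith)
  · calc (2 * C)⁻¹ * (δ / (1 + δ)) ≤ 2⁻¹ * 1 :=
          mul_le_mul (inv_anti₀ (by norm_num) (by linarith)) hδδ (by positivity) (by norm_num)
      _ ≤ s / (1 + s) := by rw [le_div_iff₀ (by linarith)]; linarith

lemma mul_rpow_sub_rpow_le {k L ξ δ p : ℝ} (hk : 0 ≤ k) (hL : 0 ≤ L) (hξ : 0 ≤ ξ) (hδ : 0 ≤ δ)
    (hp : 0 ≤ p) (hkL : δ ≤ ξ → k ≤ L) : k * (ξ ^ p - δ ^ p) ≤ L * ξ ^ p := by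
  rcases le_total ξ δ with hξδ | hδξ
  · have : ξ ^ p ≤ δ ^ p := rpow_le_rpow hξ hξδ hp
    nlinarith [rpow_nonneg hξ p]
  · calc k * (ξ ^ p - δ ^ p) ≤ k * ξ ^ p :=
          mul_le_mul_of_nonneg_left (by linarith [rpow_nonneg hδ p]) hk
      _ ≤ L * ξ ^ p := mul_le_mul_of_nonneg_right (hkL hδξ) (rpow_nonneg hξ p)

noncomputable def rpowSum {ι : Type*} [Fintype ι] (c α : ι → ℝ) (s : ℝ) : ℝ :=
  ∑ i, c i * s ^ α i

section rpowSum

variable {ι : Type*} [Fintype ι] {c α : ι → ℝ} {s A : ℝ}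

lemma rpowSum_nonneg (hc : ∀ i, 0 ≤ c i) (hs : 0 ≤ s) : 0 ≤ rpowSum c α s :=
  sum_nonneg fun i _ => mul_nonneg (hc i) (rpow_nonneg hs _)

lemma mul_rpow_le_rpowSum (hc : ∀ i, 0 ≤ c i) (hs : 0 ≤ s) (j : ι) :
    c j * s ^ α j ≤ rpowSum c α s :=
  single_le_sum (f := fun i => c i * s ^ α i)
    (fun i _ => mul_nonneg (hc i) (rpow_nonneg hs _)) (mem_univ j)

lemma rpowSum_le_sum (hc : ∀ i, 0 ≤ c i) (hα : ∀ i, 0 ≤ α i) (hs₀ : 0 ≤ s) (hs₁ : s ≤ 1) :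
    rpowSum c α s ≤ ∑ i, c i :=
  sum_le_sum fun i _ => mul_le_of_le_one_right (hc i) (rpow_le_one hs₀ hs₁ (hα i))

lemma rpowSum_le_sum_mul_one_add_rpow (hc : ∀ i, 0 ≤ c i) (hα : ∀ i, 0 ≤ α i)
    (hαA : ∀ i, α i ≤ A) (hs : 0 ≤ s) :
    rpowSum c α s ≤ (∑ i, c i) * (1 + s) ^ A := by
  rw [rpowSum, sum_mul]
  refine sum_le_sum fun i _ => mul_le_mul_of_nonneg_left ?_ (hc i)
  calc s ^ α i ≤ (1 + s) ^ α i := rpow_le_rpow hs (by linarith) (hα i)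
    _ ≤ (1 + s) ^ A := rpow_le_rpow_of_exponent_le (by linarith) (hαA i)

lemma mul_rpowSum_rpow_div_le (hc : ∀ i, 0 ≤ c i) (hA : 0 ≤ A) (hs : 0 ≤ s) {j : ι}
    (hj : α j = A) (hcj : 0 < c j) :
    (s * rpowSum c α s) ^ (A / (A + 1)) / rpowSum c α s ≤ (c j)⁻¹ ^ (1 / (A + 1)) := by
  have hG := rpowSum_nonneg (α := α) hc hs
  rw [mul_rpow_div_self_eq hs hG hA]
  refine rpow_le_rpow (by positivity) (div_le_of_le_mul₀ hG (by positivity) ?_) (by positivity)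
  rw [le_inv_mul_iff₀ hcj, ← hj]
  exact mul_rpow_le_rpowSum hc hs j

lemma le_mul_rpowSum_rpow_div (hc : ∀ i, 0 ≤ c i) (hα : ∀ i, 0 ≤ α i) (hαA : ∀ i, α i ≤ A)
    (hA : 0 ≤ A) (hs : 0 ≤ s) {C δ : ℝ} (hC : 1 ≤ C) (hCsum : ∑ i, c i ≤ C) (hδ : 0 < δ)
    (hδs : δ ≤ s * rpowSum c α s) :
    C⁻¹ ^ (1 / (A + 1)) * (2 * C)⁻¹ ^ (A / (A + 1)) * (δ / (1 + δ)) ^ (A / (A + 1)) ≤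
      (s * rpowSum c α s) ^ (A / (A + 1)) / rpowSum c α s := by
  set G := rpowSum c α s
  have hG : 0 < G := pos_of_mul_pos_right (hδ.trans_le hδs) hs
  have hratio : (2 * C)⁻¹ * (δ / (1 + δ)) ≤ s / (1 + s) :=
    inv_mul_div_le_div_one_add hs hC (fun hs₁ => (rpowSum_le_sum hc hα hs hs₁).trans hCsum) hδ hδs
  have hGC : G ≤ C * (1 + s) ^ A := (rpowSum_le_sum_mul_one_add_rpow hc hα hαA hs).trans
    (mul_le_mul_of_nonneg_right hCsum (rpow_nonneg (by linarith) _))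
  calc C⁻¹ ^ (1 / (A + 1)) * (2 * C)⁻¹ ^ (A / (A + 1)) * (δ / (1 + δ)) ^ (A / (A + 1))
      = C⁻¹ ^ (1 / (A + 1)) * ((2 * C)⁻¹ * (δ / (1 + δ))) ^ (A / (A + 1)) := by
        rw [mul_rpow (by positivity) (by positivity), mul_assoc]
    _ ≤ C⁻¹ ^ (1 / (A + 1)) * (s / (1 + s)) ^ (A / (A + 1)) :=
        mul_le_mul_of_nonneg_left (rpow_le_rpow (by positivity) hratio (by positivity))
          (by positivity)
    _ = (C⁻¹ * (s / (1 + s)) ^ A) ^ (1 / (A + 1)) := by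
        rw [mul_rpow (by positivity) (by positivity), ← rpow_mul (by positivity), mul_one_div]
    _ ≤ (s ^ A / G) ^ (1 / (A + 1)) := by
        refine rpow_le_rpow (by positivity) ?_ (by positivity)
        rw [div_rpow hs (by linarith), inv_mul_eq_div, div_div]
        exact div_le_div_of_nonneg_left (rpow_nonneg hs _) hG (hGC.trans_eq (mul_comm _ _))
    _ = (s * G) ^ (A / (A + 1)) / G := (mul_rpow_div_self_eq hs hG.le hA).symm

end rpowSum

theorem stmt5_general
    (N : ℕ)
    (α : Fin (N + 1) → ℝ) (hα0 : α 0 = 0) (hαmono : StrictMono α)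
    (c : Fin (N + 1) → ℝ) (hc : ∀ i, 0 ≤ c i) (hcN : 0 < c (Fin.last N))
    (g : ℝ → ℝ) (hg : ∀ s : ℝ, 0 ≤ s → g s = ∑ i, c i * s ^ (α i))
    (sfun : ℝ → ℝ)
    (hsfun : ∀ ξ : ℝ, 0 ≤ ξ → 0 ≤ sfun ξ ∧ sfun ξ * g (sfun ξ) = ξ)
    (K : ℝ → ℝ) (hK : ∀ ξ : ℝ, 0 ≤ ξ → K ξ = 1 / g (sfun ξ))
    (a : ℝ) (ha : a = α (Fin.last N) / (α (Fin.last N) + 1)) :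
    ∃ c₂ c₃ : ℝ, 0 < c₂ ∧ 0 < c₃ ∧
      ∀ n : ℝ, 1 ≤ n → ∀ δ : ℝ, 0 < δ → ∀ ξ : ℝ, 0 ≤ ξ →
        c₃ * (δ / (1 + δ)) ^ a * (ξ ^ (n - a) - δ ^ (n - a)) ≤ K ξ * ξ ^ n ∧
        K ξ * ξ ^ n ≤ c₂ * ξ ^ (n - a) := by
  subst ha
  set A := α (Fin.last N)
  have hα : ∀ i, 0 ≤ α i := fun i => hα0 ▸ hαmono.monotone (Fin.zero_le i)
  have hαA : ∀ i, α i ≤ A := fun i => hαmono.monotone (Fin.le_last i)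
  have ha_lt_one : A / (A + 1) < 1 := (div_lt_one (by linarith [hα (Fin.last N)])).2 (by linarith)
  set C := 1 + ∑ i, c i
  have hC : 1 ≤ C := le_add_of_nonneg_right (sum_nonneg fun i _ => hc i)
  refine ⟨(c (Fin.last N))⁻¹ ^ (1 / (A + 1)), C⁻¹ ^ (1 / (A + 1)) * (2 * C)⁻¹ ^ (A / (A + 1)),
    by positivity, by positivity, fun n hn δ hδ ξ hξ => ?_⟩
  obtain ⟨hs, hsξ⟩ := hsfun ξ hξ
  rw [hg _ hs, ← rpowSum] at hsξ
  have hG : 0 ≤ rpowSum c α (sfun ξ) := rpowSum_nonneg hc hs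
  have hKξ : K ξ * ξ ^ n = (sfun ξ * rpowSum c α (sfun ξ)) ^ (A / (A + 1)) /
      rpowSum c α (sfun ξ) * ξ ^ (n - A / (A + 1)) := by
    have hn' : ξ ^ n = ξ ^ (A / (A + 1)) * ξ ^ (n - A / (A + 1)) := by
      rw [← rpow_add' hξ (by rw [add_sub_cancel]; linarith), add_sub_cancel]
    rw [hK ξ hξ, hg _ hs, ← rpowSum, hsξ, hn']
    ring
  rw [hKξ]
  exact ⟨mul_rpow_sub_rpow_le (by positivity) (div_nonneg (rpow_nonneg (mul_nonneg hs hG) _) hG)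
      hξ hδ.le (by linarith) fun hδξ => le_mul_rpowSum_rpow_div hc hα hαA (hα _) hs hC
        (le_add_of_nonneg_left zero_le_one) hδ (hδξ.trans_eq hsξ.symm),
    mul_le_mul_of_nonneg_right (mul_rpowSum_rpow_div_le hc (hα _) hs rfl hcN) (rpow_nonneg hξ _)⟩

/-- There exist positive constants `c₂, c₃` such that for every real `n ≥ 1`, every `δ > 0`
and every `ξ ≥ 0`, `c₃ (δ/(1+δ))^a (ξ^(n-a) - δ^(n-a)) ≤ K ξ * ξ^n ≤ c₂ ξ^(n-a)`,
where `a = α_N / (α_N + 1)`. -/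
theorem stmt5
    (N : ℕ) (hN : 1 ≤ N)
    (α : Fin (N + 1) → ℝ) (hα0 : α 0 = 0) (hαmono : StrictMono α)
    (c : Fin (N + 1) → ℝ) (hc : ∀ i, 0 ≤ c i) (hc0 : 0 < c 0) (hcN : 0 < c (Fin.last N))
    (g : ℝ → ℝ) (hg : ∀ s : ℝ, 0 ≤ s → g s = ∑ i, c i * s ^ (α i))
    (sfun : ℝ → ℝ)
    (hsfun : ∀ ξ : ℝ, 0 ≤ ξ → 0 ≤ sfun ξ ∧ sfun ξ * g (sfun ξ) = ξ)
    (K : ℝ → ℝ) (hK : ∀ ξ : ℝ, 0 ≤ ξ → K ξ = 1 / g (sfun ξ))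
    (a : ℝ) (ha : a = α (Fin.last N) / (α (Fin.last N) + 1)) :
    ∃ c₂ c₃ : ℝ, 0 < c₂ ∧ 0 < c₃ ∧
      ∀ n : ℝ, 1 ≤ n → ∀ δ : ℝ, 0 < δ → ∀ ξ : ℝ, 0 ≤ ξ →
        c₃ * (δ / (1 + δ)) ^ a * (ξ ^ (n - a) - δ ^ (n - a)) ≤ K ξ * ξ ^ n ∧
        K ξ * ξ ^ n ≤ c₂ * ξ ^ (n - a) :=
  stmt5_general N α hα0 hαmono c hc hcN g hg sfun hsfun K hK a ha
end

section
/- For every dimension $d \ge 1$ and all vectors $y, y' \in \mathbb{R}^d$, $\big(K(|y'|)\,y' - K(|y|)\,y\big)\cdot(y'-y) \ge (\beta-1)\,K\big(\max\{|y|,|y'|\}\big)\,|y'-y|^2$, where $\beta = 2 - a$ and $a=\alpha_N/(\alpha_N+1)$. -/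
open RealInnerProductSpace Set

/-!
With `ξ = s g(s)` one has `ξ K(ξ) = s(ξ)`. Each `s ↦ s ^ (1 + α_i)` is convex with derivative
`(1 + α_i) s ^ α_i ≤ (α_N + 1) s ^ α_i`, so `ξ' - ξ ≤ (α_N + 1) (s' - s) g(s')` for `ξ ≤ ξ'`, i.e.
`(β - 1) K(ξ') (ξ' - ξ) ≤ ξ' K(ξ') - ξ K(ξ)`. Together with `K` being nonincreasing and
Cauchy–Schwarz `y ⬝ y' ≤ |y| |y'|`, this scalar inequality gives the vector one once the inner
product is expanded in `|y|`, `|y'|` and `y ⬝ y'`.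
-/

lemma rpow_sub_rpow_le_mul_rpow_sub_one {p s s' : ℝ} (hp : 1 ≤ p) (hs : 0 ≤ s) (hss' : s ≤ s') :
    s' ^ p - s ^ p ≤ p * s' ^ (p - 1) * (s' - s) := by
  rcases hss'.eq_or_lt with rfl | hlt
  · simp
  have hslope := (convexOn_rpow hp).slope_le_of_hasDerivAt hs (hs.trans hss') hlt
    (Real.hasDerivAt_rpow_const (Or.inr hp))
  rwa [slope_def_field, div_le_iff₀ (sub_pos.mpr hlt)] at hslope

section GeneralizedPolynomial

variable {ι : Type*} [Fintype ι] {c α : ι → ℝ} {g : ℝ → ℝ}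

lemma pos_of_eq_sum_mul_rpow (hg : ∀ s, 0 ≤ s → g s = ∑ i, c i * s ^ α i) (hc : ∀ i, 0 ≤ c i)
    {i₀ : ι} (hci₀ : 0 < c i₀) (hαi₀ : α i₀ = 0) {s : ℝ} (hs : 0 ≤ s) : 0 < g s := by
  rw [hg s hs]
  calc 0 < c i₀ * s ^ α i₀ := by rwa [hαi₀, Real.rpow_zero, mul_one]
    _ ≤ ∑ i, c i * s ^ α i :=
      Finset.single_le_sum (fun i _ => mul_nonneg (hc i) (Real.rpow_nonneg hs _))
        (Finset.mem_univ i₀)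

lemma monotoneOn_of_eq_sum_mul_rpow (hg : ∀ s, 0 ≤ s → g s = ∑ i, c i * s ^ α i)
    (hc : ∀ i, 0 ≤ c i) (hα : ∀ i, 0 ≤ α i) : MonotoneOn g (Ici 0) := by
  intro s hs s' hs' hss'
  rw [hg s hs, hg s' hs']
  gcongr with i
  exacts [hc i, hα i]

lemma mul_sub_mul_le_of_eq_sum_mul_rpow (hg : ∀ s, 0 ≤ s → g s = ∑ i, c i * s ^ α i)
    (hc : ∀ i, 0 ≤ c i) (hα : ∀ i, 0 ≤ α i) {A : ℝ} (hA : ∀ i, α i + 1 ≤ A) {s s' : ℝ}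
    (hs : 0 ≤ s) (hss' : s ≤ s') :
    s' * g s' - s * g s ≤ A * (s' - s) * g s' := by
  have hs' : 0 ≤ s' := hs.trans hss'
  rw [hg s hs, hg s' hs', Finset.mul_sum, Finset.mul_sum, Finset.mul_sum, ← Finset.sum_sub_distrib]
  gcongr with i
  have hmonomial (x : ℝ) (hx : 0 ≤ x) : x * (c i * x ^ α i) = c i * x ^ (α i + 1) := by
    rw [Real.rpow_add_one' hx (by linarith [hα i])]; ring
  have hderiv := rpow_sub_rpow_le_mul_rpow_sub_one (by linarith [hα i] : 1 ≤ α i + 1) hs hss'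
  rw [add_sub_cancel_right] at hderiv
  calc s' * (c i * s' ^ α i) - s * (c i * s ^ α i)
      = c i * (s' ^ (α i + 1) - s ^ (α i + 1)) := by rw [hmonomial s hs, hmonomial s' hs']; ring
    _ ≤ c i * ((α i + 1) * s' ^ α i * (s' - s)) := by gcongr; exact hc i
    _ ≤ c i * (A * s' ^ α i * (s' - s)) := by
        gcongr
        exacts [hc i, hA i]
    _ = A * (s' - s) * (c i * s' ^ α i) := by ring

end GeneralizedPolynomial

section InverseOfMulSelf

variable {g sfun K : ℝ → ℝ}

lemma monotoneOn_of_mul_self_eq (hgpos : ∀ s, 0 ≤ s → 0 < g s) (hgmono : MonotoneOn g (Ici 0))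
    (hsfun : ∀ ξ, 0 ≤ ξ → 0 ≤ sfun ξ ∧ sfun ξ * g (sfun ξ) = ξ) : MonotoneOn sfun (Ici 0) := by
  have hstrict : StrictMonoOn (fun s => s * g s) (Ici 0) := fun s hs s' hs' hss' =>
    mul_lt_mul hss' (hgmono hs hs' hss'.le) (hgpos s hs) (hs.trans_lt hss').le
  intro ξ hξ ξ' hξ' hξξ'
  rw [← hstrict.le_iff_le (hsfun ξ hξ).1 (hsfun ξ' hξ').1, (hsfun ξ hξ).2, (hsfun ξ' hξ').2]
  exact hξξ'

lemma mul_eq_of_eq_one_div_comp (hgpos : ∀ s, 0 ≤ s → 0 < g s)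
    (hsfun : ∀ ξ, 0 ≤ ξ → 0 ≤ sfun ξ ∧ sfun ξ * g (sfun ξ) = ξ)
    (hK : ∀ ξ, 0 ≤ ξ → K ξ = 1 / g (sfun ξ)) {ξ : ℝ} (hξ : 0 ≤ ξ) : ξ * K ξ = sfun ξ := by
  obtain ⟨hs, hsg⟩ := hsfun ξ hξ
  rw [hK ξ hξ, mul_one_div, div_eq_iff (hgpos _ hs).ne', hsg]

lemma antitoneOn_of_eq_one_div_comp (hgpos : ∀ s, 0 ≤ s → 0 < g s)
    (hgmono : MonotoneOn g (Ici 0)) (hsfun : ∀ ξ, 0 ≤ ξ → 0 ≤ sfun ξ ∧ sfun ξ * g (sfun ξ) = ξ)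
    (hK : ∀ ξ, 0 ≤ ξ → K ξ = 1 / g (sfun ξ)) : AntitoneOn K (Ici 0) := by
  intro ξ hξ ξ' hξ' hξξ'
  rw [hK ξ hξ, hK ξ' hξ']
  exact one_div_le_one_div_of_le (hgpos _ (hsfun ξ hξ).1) <|
    hgmono (hsfun ξ hξ).1 (hsfun ξ' hξ').1 (monotoneOn_of_mul_self_eq hgpos hgmono hsfun hξ hξ' hξξ')

lemma inv_mul_mul_sub_le_of_eq_one_div_comp (hgpos : ∀ s, 0 ≤ s → 0 < g s)
    (hgmono : MonotoneOn g (Ici 0)) (hsfun : ∀ ξ, 0 ≤ ξ → 0 ≤ sfun ξ ∧ sfun ξ * g (sfun ξ) = ξ)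
    (hK : ∀ ξ, 0 ≤ ξ → K ξ = 1 / g (sfun ξ)) {A : ℝ} (hA : 0 < A)
    (hgrowth : ∀ s s', 0 ≤ s → s ≤ s' → s' * g s' - s * g s ≤ A * (s' - s) * g s')
    {ξ ξ' : ℝ} (hξ : 0 ≤ ξ) (hξξ' : ξ ≤ ξ') :
    A⁻¹ * K ξ' * (ξ' - ξ) ≤ ξ' * K ξ' - ξ * K ξ := by
  have hξ' : 0 ≤ ξ' := hξ.trans hξξ'
  obtain ⟨hs, hsg⟩ := hsfun ξ hξ
  obtain ⟨hs', hsg'⟩ := hsfun ξ' hξ'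
  have hss' := monotoneOn_of_mul_self_eq hgpos hgmono hsfun hξ hξ' hξξ'
  have hgs' := hgpos _ hs'
  rw [mul_eq_of_eq_one_div_comp hgpos hsfun hK hξ, mul_eq_of_eq_one_div_comp hgpos hsfun hK hξ',
    hK ξ' hξ']
  calc A⁻¹ * (1 / g (sfun ξ')) * (ξ' - ξ)
      = A⁻¹ * (sfun ξ' * g (sfun ξ') - sfun ξ * g (sfun ξ)) / g (sfun ξ') := by
        rw [hsg, hsg']; ring
    _ ≤ A⁻¹ * (A * (sfun ξ' - sfun ξ) * g (sfun ξ')) / g (sfun ξ') := by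
        gcongr; exact hgrowth _ _ hs hss'
    _ = sfun ξ' - sfun ξ := by field_simp

end InverseOfMulSelf

section Monotonicity

variable {E : Type*} [NormedAddCommGroup E] [InnerProductSpace ℝ E]

/-- Writing `t = r r' - u` with `u ≥ 0`, the difference of the two sides is
`u (k + k' - 2λk') + (r' - r) ((r' k' - r k) - λ k' (r' - r))`. -/
lemma mul_sq_add_sq_sub_le_of_le {lam k k' r r' t : ℝ} (hlam : lam ≤ 1) (hk' : 0 ≤ k')
    (hkk' : k' ≤ k) (hrr' : r ≤ r') (hkey : lam * k' * (r' - r) ≤ r' * k' - r * k)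
    (ht : t ≤ r * r') :
    lam * k' * (r' ^ 2 + r ^ 2 - 2 * t) ≤ k' * r' ^ 2 + k * r ^ 2 - (k' + k) * t := by
  have hu : 0 ≤ (k + k' - 2 * lam * k') * (r * r' - t) :=
    mul_nonneg (by nlinarith) (by linarith)
  have hv : 0 ≤ (r' - r) * ((r' * k' - r * k) - lam * k' * (r' - r)) :=
    mul_nonneg (by linarith) (by linarith)
  nlinarith

lemma mul_max_mul_norm_sub_sq_le_inner {K : ℝ → ℝ} {lam : ℝ} (hlam : lam ≤ 1)
    (hK : ∀ ξ, 0 ≤ ξ → 0 ≤ K ξ) (hKanti : AntitoneOn K (Ici 0))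
    (hkey : ∀ ξ ξ', 0 ≤ ξ → ξ ≤ ξ' → lam * K ξ' * (ξ' - ξ) ≤ ξ' * K ξ' - ξ * K ξ) (y y' : E) :
    lam * K (max ‖y‖ ‖y'‖) * ‖y' - y‖ ^ 2 ≤ ⟪K ‖y'‖ • y' - K ‖y‖ • y, y' - y⟫ := by
  have hscalar : ∀ x x' : E, ‖x‖ ≤ ‖x'‖ →
      lam * K ‖x'‖ * ‖x' - x‖ ^ 2 ≤ ⟪K ‖x'‖ • x' - K ‖x‖ • x, x' - x⟫ := by
    intro x x' hxx'
    have hinner : ⟪K ‖x'‖ • x' - K ‖x‖ • x, x' - x⟫ =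
        K ‖x'‖ * ‖x'‖ ^ 2 + K ‖x‖ * ‖x‖ ^ 2 - (K ‖x'‖ + K ‖x‖) * ⟪x, x'⟫ := by
      simp only [inner_sub_left, inner_sub_right, real_inner_smul_left,
        real_inner_self_eq_norm_sq, real_inner_comm x x']
      ring
    rw [hinner, norm_sub_sq_real, real_inner_comm x x']
    have := mul_sq_add_sq_sub_le_of_le hlam (hK _ (norm_nonneg x'))
      (hKanti (norm_nonneg x) (norm_nonneg x') hxx') hxx' (hkey _ _ (norm_nonneg x) hxx')
      (real_inner_le_norm x x')
    linarith
  rcases le_total ‖y‖ ‖y'‖ with h | h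
  · rw [max_eq_right h]
    exact hscalar y y' h
  · rw [max_eq_left h, norm_sub_rev, ← inner_neg_neg, neg_sub, neg_sub]
    exact hscalar y' y h

end Monotonicity

theorem stmt8_general
    (N : ℕ)
    (α : Fin (N + 1) → ℝ) (hα0 : α 0 = 0) (hαmono : StrictMono α)
    (c : Fin (N + 1) → ℝ) (hc : ∀ i, 0 ≤ c i) (hc0 : 0 < c 0)
    (g : ℝ → ℝ) (hg : ∀ s : ℝ, 0 ≤ s → g s = ∑ i, c i * s ^ (α i))
    (sfun : ℝ → ℝ)
    (hsfun : ∀ ξ : ℝ, 0 ≤ ξ → 0 ≤ sfun ξ ∧ sfun ξ * g (sfun ξ) = ξ)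
    (K : ℝ → ℝ) (hK : ∀ ξ : ℝ, 0 ≤ ξ → K ξ = 1 / g (sfun ξ))
    (a : ℝ) (ha : a = α (Fin.last N) / (α (Fin.last N) + 1))
    (β : ℝ) (hβ : β = 2 - a) :
    ∀ d : ℕ, 1 ≤ d → ∀ y y' : EuclideanSpace ℝ (Fin d),
      (β - 1) * K (max ‖y‖ ‖y'‖) * ‖y' - y‖ ^ 2 ≤
        ⟪K ‖y'‖ • y' - K ‖y‖ • y, y' - y⟫ := by
  intro d _ y y'
  have hα : ∀ i, 0 ≤ α i := fun i => hα0 ▸ hαmono.monotone (Fin.zero_le i)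
  have hA : 0 < α (Fin.last N) + 1 := by linarith [hα (Fin.last N)]
  have hβA : β - 1 = (α (Fin.last N) + 1)⁻¹ := by
    rw [hβ, ha]; field_simp; ring
  have hgpos : ∀ s, 0 ≤ s → 0 < g s := fun s => pos_of_eq_sum_mul_rpow hg hc hc0 hα0
  have hgmono := monotoneOn_of_eq_sum_mul_rpow hg hc hα
  have hgrowth : ∀ s s', 0 ≤ s → s ≤ s' →
      s' * g s' - s * g s ≤ (α (Fin.last N) + 1) * (s' - s) * g s' := fun s s' hs hss' =>
    mul_sub_mul_le_of_eq_sum_mul_rpow hg hc hα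
      (fun i => by linarith [hαmono.monotone (Fin.le_last i)]) hs hss'
  have hKnonneg : ∀ ξ, 0 ≤ ξ → 0 ≤ K ξ := fun ξ hξ => by
    rw [hK ξ hξ]
    exact (one_div_pos.mpr (hgpos _ (hsfun ξ hξ).1)).le
  rw [hβA]
  exact mul_max_mul_norm_sub_sq_le_inner (inv_le_one_of_one_le₀ (by linarith [hα (Fin.last N)]))
    hKnonneg (antitoneOn_of_eq_one_div_comp hgpos hgmono hsfun hK)
    (fun ξ ξ' hξ hξξ' =>
      inv_mul_mul_sub_le_of_eq_one_div_comp hgpos hgmono hsfun hK hA hgrowth hξ hξξ') y y'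

/-- Monotonicity: for every dimension `d ≥ 1` and all `y, y' ∈ ℝ^d`,
`(K(|y'|) y' - K(|y|) y) ⬝ (y' - y) ≥ (β - 1) K(max{|y|,|y'|}) |y' - y|²`,
where `β = 2 - a` and `a = α_N / (α_N + 1)`. -/
theorem stmt8
    (N : ℕ) (hN : 1 ≤ N)
    (α : Fin (N + 1) → ℝ) (hα0 : α 0 = 0) (hαmono : StrictMono α)
    (c : Fin (N + 1) → ℝ) (hc : ∀ i, 0 ≤ c i) (hc0 : 0 < c 0) (hcN : 0 < c (Fin.last N))
    (g : ℝ → ℝ) (hg : ∀ s : ℝ, 0 ≤ s → g s = ∑ i, c i * s ^ (α i))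
    (sfun : ℝ → ℝ)
    (hsfun : ∀ ξ : ℝ, 0 ≤ ξ → 0 ≤ sfun ξ ∧ sfun ξ * g (sfun ξ) = ξ)
    (K : ℝ → ℝ) (hK : ∀ ξ : ℝ, 0 ≤ ξ → K ξ = 1 / g (sfun ξ))
    (a : ℝ) (ha : a = α (Fin.last N) / (α (Fin.last N) + 1))
    (β : ℝ) (hβ : β = 2 - a) :
    ∀ d : ℕ, 1 ≤ d → ∀ y y' : EuclideanSpace ℝ (Fin d),
      (β - 1) * K (max ‖y‖ ‖y'‖) * ‖y' - y‖ ^ 2 ≤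
        ⟪K ‖y'‖ • y' - K ‖y‖ • y, y' - y⟫ :=
  stmt8_general N α hα0 hαmono c hc hc0 g hg sfun hsfun K hK a ha β hβ
end

section
/- Let $\theta > 0$ and let $y, h, f : [0,\infty) \to \mathbb{R}$ be continuous with $y(t) \ge 0$, $h(t) > 0$, $f(t) \ge 0$ for all $t$, and suppose $y$ is differentiable on $(0,\infty)$ with $y'(t) + h(t)\,y(t)^\theta \le f(t)$ for all $t > 0$. Then for every continuous increasing function $F : [0,\infty) \to \mathbb{R}$ satisfying $F(t) \ge f(t)/h(t)$ for all $t \ge 0$, one has $y(t) \le y(0) + F(t)^{1/\theta}$ for all $t \ge 0$. -/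
/-!
Suppose `y t > M := y 0 + F(t)^{1/θ}` and let `s₀` be the last time in `[0, t]` at which
`y ≤ M`. On `(s₀, t)` we have `y > F(t)^{1/θ}`, so `h y^θ > h F(t) ≥ h F(x) ≥ f`, and the
differential inequality makes `y` nonincreasing there; hence `y t ≤ y s₀ ≤ M`.
-/

open Set

theorem le_of_deriv_nonpos_of_lt {y y' : ℝ → ℝ} {a b M : ℝ} (hab : a ≤ b)
    (hy : ContinuousOn y (Icc a b)) (hderiv : ∀ x ∈ Ioo a b, HasDerivAt y (y' x) x)
    (hdecr : ∀ x ∈ Ioo a b, M < y x → y' x ≤ 0) (ha : y a ≤ M) : y b ≤ M := by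
  by_contra! hb
  set S := Icc a b ∩ y ⁻¹' Iic M
  have hS : IsCompact S :=
    isCompact_Icc.of_isClosed_subset
      (hy.preimage_isClosed_of_isClosed isClosed_Icc isClosed_Iic) inter_subset_left
  obtain ⟨⟨has₀, hs₀b⟩, hys₀ : y (sSup S) ≤ M⟩ : sSup S ∈ S :=
    hS.sSup_mem ⟨a, ⟨le_rfl, hab⟩, ha⟩
  have habove : ∀ x ∈ Ioo (sSup S) b, M < y x := fun x hx ↦ by
    by_contra! hle
    exact hx.1.not_ge (le_csSup hS.bddAbove ⟨⟨has₀.trans hx.1.le, hx.2.le⟩, hle⟩)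
  have hanti : AntitoneOn y (Icc (sSup S) b) := by
    refine antitoneOn_of_hasDerivWithinAt_nonpos (f' := y') (convex_Icc _ _)
      (hy.mono (Icc_subset_Icc_left has₀)) (fun x hx ↦ ?_) (fun x hx ↦ ?_) <;>
      rw [interior_Icc] at hx
    · exact (hderiv x ⟨has₀.trans_lt hx.1, hx.2⟩).hasDerivWithinAt
    · exact hdecr x ⟨has₀.trans_lt hx.1, hx.2⟩ (habove x hx)
  have hyb : y b ≤ y (sSup S) := hanti (left_mem_Icc.mpr hs₀b) (right_mem_Icc.mpr hs₀b) hs₀b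
  linarith

theorem stmt11_general
    (θ : ℝ) (hθ : 0 < θ)
    (y h f : ℝ → ℝ)
    (hycont : ContinuousOn y (Set.Ici (0 : ℝ)))
    (hy : ∀ t : ℝ, 0 ≤ t → 0 ≤ y t)
    (hh : ∀ t : ℝ, 0 ≤ t → 0 < h t)
    (hf : ∀ t : ℝ, 0 ≤ t → 0 ≤ f t)
    (y' : ℝ → ℝ) (hderiv : ∀ t : ℝ, 0 < t → HasDerivAt y (y' t) t)
    (hineq : ∀ t : ℝ, 0 < t → y' t + h t * y t ^ θ ≤ f t) :
    ∀ F : ℝ → ℝ, ContinuousOn F (Set.Ici (0 : ℝ)) → MonotoneOn F (Set.Ici (0 : ℝ)) →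
      (∀ t : ℝ, 0 ≤ t → f t / h t ≤ F t) →
      ∀ t : ℝ, 0 ≤ t → y t ≤ y 0 + F t ^ (1 / θ) := by
  intro F _ hFmono hFenv t ht
  have hFt : 0 ≤ F t := (div_nonneg (hf t ht) (hh t ht).le).trans (hFenv t ht)
  refine le_of_deriv_nonpos_of_lt ht (hycont.mono Icc_subset_Ici_self)
    (fun x hx ↦ hderiv x hx.1) (fun x hxt hyx ↦ ?_)
    (le_add_of_nonneg_right (Real.rpow_nonneg hFt _))
  have hx : 0 ≤ x := hxt.1.le
  have hFy : F t ≤ y x ^ θ := by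
    rw [← Real.rpow_inv_le_iff_of_pos hFt (hy x hx) hθ, ← one_div]
    linarith [hy 0 le_rfl]
  have hfx : f x ≤ h x * y x ^ θ := by
    rw [← div_le_iff₀' (hh x hx)]
    exact (hFenv x hx).trans ((hFmono hx ht hxt.2.le).trans hFy)
  linarith [hineq x hxt.1]

/-- Gronwall-type inequality: if `y' + h y^θ ≤ f` on `(0,∞)`, then for every continuous
increasing envelope `F` of `f/h` on `[0,∞)`, `y(t) ≤ y(0) + F(t)^{1/θ}` for all `t ≥ 0`. -/
theorem stmt11
    (θ : ℝ) (hθ : 0 < θ)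
    (y h f : ℝ → ℝ)
    (hycont : ContinuousOn y (Set.Ici (0 : ℝ)))
    (hhcont : ContinuousOn h (Set.Ici (0 : ℝ)))
    (hfcont : ContinuousOn f (Set.Ici (0 : ℝ)))
    (hy : ∀ t : ℝ, 0 ≤ t → 0 ≤ y t)
    (hh : ∀ t : ℝ, 0 ≤ t → 0 < h t)
    (hf : ∀ t : ℝ, 0 ≤ t → 0 ≤ f t)
    (y' : ℝ → ℝ) (hderiv : ∀ t : ℝ, 0 < t → HasDerivAt y (y' t) t)
    (hineq : ∀ t : ℝ, 0 < t → y' t + h t * y t ^ θ ≤ f t) :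
    ∀ F : ℝ → ℝ, ContinuousOn F (Set.Ici (0 : ℝ)) → MonotoneOn F (Set.Ici (0 : ℝ)) →
      (∀ t : ℝ, 0 ≤ t → f t / h t ≤ F t) →
      ∀ t : ℝ, 0 ≤ t → y t ≤ y 0 + F t ^ (1 / θ) :=
  stmt11_general θ hθ y h f hycont hy hh hf y' hderiv hineq
end

section
/- Let $\theta > 0$ and let $y, h, f : [0,\infty) \to \mathbb{R}$ be continuous with $y(t) \ge 0$, $h(t) > 0$, $f(t) \ge 0$ for all $t$, and suppose $y$ is differentiable on $(0,\infty)$ with $y'(t) + h(t)\,y(t)^\theta \le f(t)$ for all $t > 0$. If $\int_0^\infty h(t)\,dt = \infty$, then $\limsup_{t\to\infty} y(t) \le \limsup_{t\to\infty} \big(f(t)/h(t)\big)^{1/\theta}$. -/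
/-!
Write `L` for the right-hand limsup and fix `L < m < c`. Eventually `f ≤ m^θ h`, so wherever
`y ≥ c` the differential inequality gives `y' ≤ -(c^θ - m^θ) h < 0`. Hence `y` cannot cross the
level `c` upwards, and it must drop below `c` at some time, since otherwise
`y(t) ≤ y(T) - (c^θ - m^θ) ∫_T^t h` would become negative as `∫ h = ∞`. Thus `y ≤ c` eventually.
-/

open Filter MeasureTheory Set

theorem exists_lt_intervalIntegral_of_setLIntegral_eq_top {h : ℝ → ℝ} {a T : ℝ}
    (hcont : ContinuousOn h (Ici a)) (hnonneg : ∀ t, a ≤ t → 0 ≤ h t)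
    (htop : ∫⁻ t in Ioi a, ENNReal.ofReal (h t) = ⊤) (haT : a ≤ T) (I : ℝ) :
    ∃ t, T ≤ t ∧ I < ∫ s in T..t, h s := by
  have hloc : ∀ u v, a ≤ u → IntegrableOn h (Ioc u v) := fun u v hu =>
    ((hcont.mono fun x hx => hu.trans hx.1).integrableOn_Icc).mono_set Ioc_subset_Icc_self
  by_contra! hbdd
  have hnorm : ∀ t, T ≤ t → ∫ s in T..t, ‖h s‖ = ∫ s in T..t, h s := fun t ht =>
    intervalIntegral.integral_congr fun s hs =>
      Real.norm_of_nonneg (hnonneg s (haT.trans (uIcc_of_le ht ▸ hs).1))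
  have hT : IntegrableOn h (Ioi T) :=
    integrableOn_Ioi_of_intervalIntegral_norm_bounded I T (fun t => hloc T t haT) tendsto_id
      (eventually_atTop.2 ⟨T, fun t ht => (hnorm t ht).trans_le (hbdd t ht)⟩)
  have ha : IntegrableOn h (Ioi a) := by
    rw [← Ioc_union_Ioi_eq_Ioi haT]
    exact (hloc a T le_rfl).union hT
  exact ha.setLIntegral_lt_top.ne htop

theorem le_of_hasDerivAt_neg_of_eq {y y' : ℝ → ℝ} {t₀ c : ℝ}
    (hderiv : ∀ t, t₀ ≤ t → HasDerivAt y (y' t) t) (hneg : ∀ t, t₀ ≤ t → y t = c → y' t < 0)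
    (h₀ : y t₀ ≤ c) {t : ℝ} (ht : t₀ ≤ t) : y t ≤ c :=
  image_le_of_deriv_right_lt_deriv_boundary (B := fun _ => c) (B' := 0)
    (fun s hs => (hderiv s hs.1).continuousAt.continuousWithinAt)
    (fun s hs => (hderiv s hs.1).hasDerivWithinAt) h₀ (fun _ => hasDerivAt_const _ _)
    (fun s hs => hneg s hs.1) ⟨ht, le_rfl⟩

theorem exists_le_of_hasDerivAt_le_neg {y y' k : ℝ → ℝ} {T b c : ℝ}
    (hderiv : ∀ t, T ≤ t → HasDerivAt y (y' t) t) (hdecay : ∀ t, T ≤ t → c < y t → y' t ≤ -k t)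
    (hk : ContinuousOn k (Ici T)) (hb : ∀ t, T ≤ t → b ≤ y t)
    (hunbdd : ∀ I, ∃ t, T ≤ t ∧ I < ∫ s in T..t, k s) :
    ∃ t, T ≤ t ∧ y t ≤ c := by
  by_contra! habove
  obtain ⟨t, hTt, hlarge⟩ := hunbdd (y T - b)
  have hdrop : y t - y T ≤ ∫ s in T..t, -k s :=
    intervalIntegral.sub_le_integral_of_hasDeriv_right_of_le hTt
      (fun s hs => (hderiv s hs.1).continuousAt.continuousWithinAt)
      (fun s hs => (hderiv s hs.1.le).hasDerivWithinAt)
      (hk.neg.mono fun s hs => hs.1).integrableOn_Icc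
      (fun s hs => hdecay s hs.1.le (habove s hs.1.le))
  rw [intervalIntegral.integral_neg] at hdrop
  linarith [hb t hTt]

theorem eventually_le_of_hasDerivAt_le_neg {y y' k : ℝ → ℝ} {T b c : ℝ}
    (hderiv : ∀ t, T ≤ t → HasDerivAt y (y' t) t) (hdecay : ∀ t, T ≤ t → c ≤ y t → y' t ≤ -k t)
    (hk_pos : ∀ t, T ≤ t → 0 < k t) (hk : ContinuousOn k (Ici T))
    (hb : ∀ t, T ≤ t → b ≤ y t) (hunbdd : ∀ I, ∃ t, T ≤ t ∧ I < ∫ s in T..t, k s) :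
    ∀ᶠ t in atTop, y t ≤ c := by
  obtain ⟨t₀, hTt₀, hyt₀⟩ :=
    exists_le_of_hasDerivAt_le_neg hderiv (fun t ht hc => hdecay t ht hc.le) hk hb hunbdd
  refine eventually_atTop.2 ⟨t₀, fun t ht => le_of_hasDerivAt_neg_of_eq
    (fun s hs => hderiv s (hTt₀.trans hs)) (fun s hs hyc => ?_) hyt₀ ht⟩
  have hTs := hTt₀.trans hs
  exact (hdecay s hTs hyc.ge).trans_lt (neg_neg_of_pos (hk_pos s hTs))

theorem le_rpow_mul_of_div_rpow_inv_le {θ f h m : ℝ} (hθ : 0 < θ) (hf : 0 ≤ f) (hh : 0 < h)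
    (hm : 0 ≤ m) (hle : (f / h) ^ (1 / θ) ≤ m) : f ≤ m ^ θ * h := by
  rw [one_div, Real.rpow_inv_le_iff_of_pos (div_nonneg hf hh.le) hm hθ, div_le_iff₀ hh] at hle
  exact hle

theorem stmt12_general
    (θ : ℝ) (hθ : 0 < θ)
    (y h f : ℝ → ℝ)
    (hhcont : ContinuousOn h (Set.Ici (0 : ℝ)))
    (hy : ∀ t : ℝ, 0 ≤ t → 0 ≤ y t)
    (hh : ∀ t : ℝ, 0 ≤ t → 0 < h t)
    (hf : ∀ t : ℝ, 0 ≤ t → 0 ≤ f t)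
    (y' : ℝ → ℝ) (hderiv : ∀ t : ℝ, 0 < t → HasDerivAt y (y' t) t)
    (hineq : ∀ t : ℝ, 0 < t → y' t + h t * y t ^ θ ≤ f t)
    (hhint : ∫⁻ t in Set.Ioi (0 : ℝ), ENNReal.ofReal (h t) = ⊤)
    (hbdd : IsBoundedUnder (· ≤ ·) atTop (fun t : ℝ => (f t / h t) ^ (1 / θ))) :
    limsup y atTop ≤ limsup (fun t : ℝ => (f t / h t) ^ (1 / θ)) atTop := by
  have hL : 0 ≤ limsup (fun t : ℝ => (f t / h t) ^ (1 / θ)) atTop :=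
    le_limsup_of_frequently_le ((eventually_ge_atTop 0).mono fun t ht =>
      Real.rpow_nonneg (div_nonneg (hf t ht) (hh t ht).le) _).frequently hbdd
  have hy_cobdd : IsCoboundedUnder (· ≤ ·) atTop y :=
    isBoundedUnder_of_eventually_ge ((eventually_ge_atTop 0).mono hy) |>.isCoboundedUnder_le
  refine le_of_forall_gt_imp_ge_of_dense fun c hc => limsup_le_of_le hy_cobdd ?_
  obtain ⟨m, hLm, hmc⟩ := exists_between hc
  have hm : 0 < m := hL.trans_lt hLm
  obtain ⟨T, hT⟩ := eventually_atTop.1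
    ((eventually_lt_of_limsup_lt hLm hbdd).and (eventually_gt_atTop 0))
  have hT0 : 0 < T := (hT T le_rfl).2
  have hδ : 0 < c ^ θ - m ^ θ := sub_pos.2 (Real.rpow_lt_rpow hm.le hmc hθ)
  refine eventually_le_of_hasDerivAt_le_neg (k := fun t => (c ^ θ - m ^ θ) * h t) (b := 0)
    (fun t ht => hderiv t (hT t ht).2) (fun t ht hc => ?_)
    (fun t ht => mul_pos hδ (hh t (hT t ht).2.le))
    (continuousOn_const.mul (hhcont.mono fun s hs => hT0.le.trans hs))
    (fun t ht => hy t (hT t ht).2.le) (fun I => ?_)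
  · obtain ⟨hgt, ht0⟩ := hT t ht
    have hfm := le_rpow_mul_of_div_rpow_inv_le hθ (hf t ht0.le) (hh t ht0.le) hm.le hgt.le
    have hyc : h t * c ^ θ ≤ h t * y t ^ θ :=
      mul_le_mul_of_nonneg_left (Real.rpow_le_rpow (hm.trans hmc).le hc hθ.le) (hh t ht0.le).le
    linarith [hineq t ht0]
  · obtain ⟨t, hTt, ht⟩ := exists_lt_intervalIntegral_of_setLIntegral_eq_top hhcont
      (fun s hs => (hh s hs).le) hhint hT0.le (I / (c ^ θ - m ^ θ))
    exact ⟨t, hTt, by rwa [intervalIntegral.integral_const_mul, ← div_lt_iff₀' hδ]⟩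

/-- Gronwall-type asymptotic inequality: if `y' + h y^θ ≤ f` on `(0,∞)` and
`∫_0^∞ h(t) dt = ∞`, then `limsup_{t→∞} y(t) ≤ limsup_{t→∞} (f(t)/h(t))^{1/θ}`
(understood when the right-hand side limsup is finite). -/
theorem stmt12
    (θ : ℝ) (hθ : 0 < θ)
    (y h f : ℝ → ℝ)
    (hycont : ContinuousOn y (Set.Ici (0 : ℝ)))
    (hhcont : ContinuousOn h (Set.Ici (0 : ℝ)))
    (hfcont : ContinuousOn f (Set.Ici (0 : ℝ)))
    (hy : ∀ t : ℝ, 0 ≤ t → 0 ≤ y t)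
    (hh : ∀ t : ℝ, 0 ≤ t → 0 < h t)
    (hf : ∀ t : ℝ, 0 ≤ t → 0 ≤ f t)
    (y' : ℝ → ℝ) (hderiv : ∀ t : ℝ, 0 < t → HasDerivAt y (y' t) t)
    (hineq : ∀ t : ℝ, 0 < t → y' t + h t * y t ^ θ ≤ f t)
    (hhint : ∫⁻ t in Set.Ioi (0 : ℝ), ENNReal.ofReal (h t) = ⊤)
    (hbdd : IsBoundedUnder (· ≤ ·) atTop (fun t : ℝ => (f t / h t) ^ (1 / θ))) :
    limsup y atTop ≤ limsup (fun t : ℝ => (f t / h t) ^ (1 / θ)) atTop :=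
  stmt12_general θ hθ y h f hhcont hy hh hf y' hderiv hineq hhint hbdd
end
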